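/- Let C ⊆ ℂⁿ be a coisotropic real subspace of real dimension n + k with respect to the standard symplectic form ω₀, and let C^{ω₀} be its symplectic orthogonal complement. Then H_C := C ∩ iC is a complex subspace of ℂⁿ (i.e., closed under multiplication by i) of complex dimension k, H_C is orthogonal to C^{ω₀} with respect to the real inner product g, H_C ∩ C^{ω₀} = {0}, and C = H_C ⊕ C^{ω₀} as an internal direct sum of real subspaces. -/

import Mathlib

noncomputable section

open scoped InnerProductSpace

/-- `ℂⁿ` regarded as a (real) inner product space: the standard symplectic form
`ω₀(x, y) = g(Jx, y) = Re⟨ix, y⟩`, where `⟨·,·⟩` is the Hermitian inner product,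
`g = Re⟨·,·⟩` and `J` is multiplication by `i`. -/
def omega0 {n : ℕ} (x y : EuclideanSpace ℂ (Fin n)) : ℝ :=
  (inner ℂ (Complex.I • x) y : ℂ).re

/-- The symplectic orthogonal complement
`C^{ω₀} = {v ∈ ℂⁿ : ω₀(v, w) = 0 for all w ∈ C}` of a real subspace `C ⊆ ℂⁿ`.
`C` is coisotropic when `symplOrth C ≤ C`. -/
def symplOrth {n : ℕ} (C : Submodule ℝ (EuclideanSpace ℂ (Fin n))) :
    Submodule ℝ (EuclideanSpace ℂ (Fin n)) where
  carrier := {v | ∀ w ∈ C, omega0 v w = 0}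
  add_mem' {a b} ha hb := fun w hw => by
    have h1 := ha w hw
    have h2 := hb w hw
    simp only [omega0, smul_add, inner_add_left, Complex.add_re] at *
    linarith
  zero_mem' := fun w hw => by simp [omega0]
  smul_mem' r v hv := fun w hw => by
    have h := hv w hw
    simp only [omega0] at *
    rw [smul_comm, RCLike.real_smul_eq_coe_smul (K := ℂ), inner_smul_real_left,
      Complex.smul_re, h, smul_zero]

/-- Multiplication by `i` on `ℂⁿ`, as a real-linear map (the standard complex
structure `J`). -/
def Jmul (n : ℕ) : EuclideanSpace ℂ (Fin n) →ₗ[ℝ] EuclideanSpace ℂ (Fin n) :=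
  LinearMap.restrictScalars ℝ (LinearMap.lsmul ℂ (EuclideanSpace ℂ (Fin n)) Complex.I)

/-!
Since `ω₀(x, y) = Im⟪x, y⟫`, the symplectic complement is `C^{ω₀} = i·C^⊥`, of real dimension
`2n - dim C`. For `x ∈ H_C` both `x` and `ix` lie in `C`, so for `y ∈ C^{ω₀}` the vanishing of
`ω₀(y, x)` and `ω₀(y, ix)` kills the imaginary and the real part of `⟪y, x⟫`: thus `H_C` is
Hermitian-orthogonal to `C^{ω₀}`, and in particular meets it only in `0`. Counting dimensions,
`C + iC ⊆ ℂⁿ` gives `dim H_C ≥ 2 dim C - 2n`, while `H_C ⊕ C^{ω₀} ⊆ C` (coisotropy) gives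
`dim H_C ≤ 2 dim C - 2n`; equality forces `H_C ⊕ C^{ω₀} = C`.
-/

section

variable {n : ℕ}

open Complex

lemma Jmul_apply (x : EuclideanSpace ℂ (Fin n)) : Jmul n x = I • x := rfl

lemma real_inner_eq_re_inner_euclideanSpace (x y : EuclideanSpace ℂ (Fin n)) :
    ⟪x, y⟫_ℝ = (⟪x, y⟫_ℂ).re := by
  simp [PiLp.inner_apply, Complex.inner, Complex.re_sum]

lemma omega0_eq_im_inner (x y : EuclideanSpace ℂ (Fin n)) : omega0 x y = (⟪x, y⟫_ℂ).im := by
  simp [omega0]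

lemma finrank_euclideanSpace_complex : Module.finrank ℝ (EuclideanSpace ℂ (Fin n)) = 2 * n := by
  rw [← Module.finrank_mul_finrank ℝ ℂ, Complex.finrank_real_complex, finrank_euclideanSpace_fin]

lemma mem_map_Jmul_iff {V : Submodule ℝ (EuclideanSpace ℂ (Fin n))} {x : EuclideanSpace ℂ (Fin n)} :
    x ∈ V.map (Jmul n) ↔ I • x ∈ V := by
  constructor
  · rintro ⟨y, hy, rfl⟩
    simpa [Jmul_apply, smul_smul] using V.neg_mem hy
  · intro hx
    refine ⟨-(I • x), V.neg_mem hx, ?_⟩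
    simp [Jmul_apply, smul_smul]

lemma finrank_map_Jmul (V : Submodule ℝ (EuclideanSpace ℂ (Fin n))) :
    Module.finrank ℝ (V.map (Jmul n)) = Module.finrank ℝ V :=
  ((LinearEquiv.smulOfNeZero ℂ _ I I_ne_zero).restrictScalars ℝ).finrank_map_eq V

lemma symplOrth_eq_map_Jmul_orthogonal (C : Submodule ℝ (EuclideanSpace ℂ (Fin n))) :
    symplOrth C = Cᗮ.map (Jmul n) := by
  ext v
  rw [mem_map_Jmul_iff, Submodule.mem_orthogonal]
  refine forall₂_congr fun w _ => ?_
  rw [omega0, ← real_inner_eq_re_inner_euclideanSpace, real_inner_comm]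

lemma finrank_symplOrth_add_finrank (C : Submodule ℝ (EuclideanSpace ℂ (Fin n))) :
    Module.finrank ℝ (symplOrth C) + Module.finrank ℝ C = 2 * n := by
  rw [symplOrth_eq_map_Jmul_orthogonal, finrank_map_Jmul, add_comm,
    Submodule.finrank_add_finrank_orthogonal, finrank_euclideanSpace_complex]

variable {C : Submodule ℝ (EuclideanSpace ℂ (Fin n))}

lemma smul_I_mem_inf_map_Jmul {x : EuclideanSpace ℂ (Fin n)} (hx : x ∈ C ⊓ C.map (Jmul n)) :
    I • x ∈ C ⊓ C.map (Jmul n) := by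
  obtain ⟨hxC, hIx⟩ := Submodule.mem_inf.mp hx
  refine Submodule.mem_inf.mpr ⟨mem_map_Jmul_iff.mp hIx, mem_map_Jmul_iff.mpr ?_⟩
  simpa [smul_smul] using C.neg_mem hxC

lemma inner_eq_zero_of_mem_symplOrth_of_mem_inf_map_Jmul {x y : EuclideanSpace ℂ (Fin n)}
    (hy : y ∈ symplOrth C) (hx : x ∈ C ⊓ C.map (Jmul n)) : ⟪y, x⟫_ℂ = 0 := by
  obtain ⟨hxC, hIx⟩ := Submodule.mem_inf.mp hx
  have him : (⟪y, x⟫_ℂ).im = 0 := by rw [← omega0_eq_im_inner]; exact hy x hxC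
  have hre : (⟪y, x⟫_ℂ).re = 0 := by
    simpa [omega0_eq_im_inner, inner_smul_right] using hy _ (mem_map_Jmul_iff.mp hIx)
  exact Complex.ext hre him

lemma inf_map_Jmul_inf_symplOrth_eq_bot : C ⊓ C.map (Jmul n) ⊓ symplOrth C = ⊥ := by
  refine (Submodule.eq_bot_iff _).mpr fun x hx => ?_
  obtain ⟨hxH, hxS⟩ := Submodule.mem_inf.mp hx
  exact inner_self_eq_zero.mp (inner_eq_zero_of_mem_symplOrth_of_mem_inf_map_Jmul hxS hxH)

lemma two_mul_finrank_le_finrank_inf_map_Jmul_add :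
    2 * Module.finrank ℝ C ≤ Module.finrank ℝ ↥(C ⊓ C.map (Jmul n)) + 2 * n := by
  have h := Submodule.finrank_sup_add_finrank_inf_eq C (C.map (Jmul n))
  have hle : Module.finrank ℝ ↥(C ⊔ C.map (Jmul n)) ≤ 2 * n :=
    finrank_euclideanSpace_complex (n := n) ▸ Submodule.finrank_le _
  rw [finrank_map_Jmul] at h
  omega

lemma finrank_inf_map_Jmul_sup_symplOrth :
    Module.finrank ℝ ↥(C ⊓ C.map (Jmul n) ⊔ symplOrth C) =
      Module.finrank ℝ ↥(C ⊓ C.map (Jmul n)) + Module.finrank ℝ (symplOrth C) := by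
  have h := Submodule.finrank_sup_add_finrank_inf_eq (C ⊓ C.map (Jmul n)) (symplOrth C)
  rwa [inf_map_Jmul_inf_symplOrth_eq_bot, finrank_bot, add_zero] at h

lemma finrank_inf_map_Jmul_add_finrank_symplOrth (hco : symplOrth C ≤ C) :
    Module.finrank ℝ ↥(C ⊓ C.map (Jmul n)) + Module.finrank ℝ (symplOrth C) =
      Module.finrank ℝ C := by
  have hle : Module.finrank ℝ ↥(C ⊓ C.map (Jmul n) ⊔ symplOrth C) ≤ Module.finrank ℝ C :=
    Submodule.finrank_mono (sup_le inf_le_left hco)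
  have := two_mul_finrank_le_finrank_inf_map_Jmul_add (C := C)
  have := finrank_symplOrth_add_finrank C
  rw [finrank_inf_map_Jmul_sup_symplOrth] at hle
  omega

end

theorem coisotropic_holomorphic_splitting_general
    (n k : ℕ)
    (C : Submodule ℝ (EuclideanSpace ℂ (Fin n)))
    (hco : symplOrth C ≤ C)
    (hdim : Module.finrank ℝ C = n + k) :
    (∀ x ∈ C ⊓ C.map (Jmul n), Complex.I • x ∈ C ⊓ C.map (Jmul n)) ∧
    Module.finrank ℝ (C ⊓ C.map (Jmul n) : Submodule ℝ (EuclideanSpace ℂ (Fin n))) = 2 * k ∧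
    (∀ x ∈ C ⊓ C.map (Jmul n), ∀ y ∈ symplOrth C, (inner ℂ x y : ℂ).re = 0) ∧
    (C ⊓ C.map (Jmul n)) ⊓ symplOrth C = ⊥ ∧
    (C ⊓ C.map (Jmul n)) ⊔ symplOrth C = C := by
  have hsum := finrank_inf_map_Jmul_add_finrank_symplOrth hco
  have hcompl := finrank_symplOrth_add_finrank C
  refine ⟨fun x hx => smul_I_mem_inf_map_Jmul hx, by omega, fun x hx y hy => ?_,
    inf_map_Jmul_inf_symplOrth_eq_bot, ?_⟩
  · rw [← inner_conj_symm, inner_eq_zero_of_mem_symplOrth_of_mem_inf_map_Jmul hy hx, map_zero,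
      Complex.zero_re]
  · refine Submodule.eq_of_le_of_finrank_eq (sup_le inf_le_left hco) ?_
    rw [finrank_inf_map_Jmul_sup_symplOrth, hsum]

/-- Let `C ⊆ ℂⁿ` be a coisotropic real subspace of real dimension `n + k`
with respect to the standard symplectic form `ω₀`, and let `C^{ω₀}` be its symplectic
orthogonal complement.  Then `H_C := C ∩ iC` is a complex subspace of `ℂⁿ` (i.e.
closed under multiplication by `i`) of complex dimension `k` (real dimension `2k`),
`H_C` is orthogonal to `C^{ω₀}` with respect to the real inner product `g = Re⟨·,·⟩`,
`H_C ∩ C^{ω₀} = {0}`, and `C = H_C ⊕ C^{ω₀}` as an internal direct sum of real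
subspaces. -/
theorem coisotropic_holomorphic_splitting
    (n k : ℕ) (hk : k ≤ n)
    (C : Submodule ℝ (EuclideanSpace ℂ (Fin n)))
    (hco : symplOrth C ≤ C)
    (hdim : Module.finrank ℝ C = n + k) :
    (∀ x ∈ C ⊓ C.map (Jmul n), Complex.I • x ∈ C ⊓ C.map (Jmul n)) ∧
    Module.finrank ℝ (C ⊓ C.map (Jmul n) : Submodule ℝ (EuclideanSpace ℂ (Fin n))) = 2 * k ∧
    (∀ x ∈ C ⊓ C.map (Jmul n), ∀ y ∈ symplOrth C, (inner ℂ x y : ℂ).re = 0) ∧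
    (C ⊓ C.map (Jmul n)) ⊓ symplOrth C = ⊥ ∧
    (C ⊓ C.map (Jmul n)) ⊔ symplOrth C = C :=
  coisotropic_holomorphic_splitting_general n k C hco hdim
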